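/- For all 0 ≤ t ≤ θ and every integrable F_θ-measurable random variable φ_θ, one has P(τ > t, E_P[S_t | F^D_t] = 0) = 0 and, P-almost surely, E_P[φ_θ 1_{τ > θ} | G^D_t] = 1_{τ > t} · E_P[φ_θ S_θ | F^D_t] / E_P[S_t | F^D_t], where the right-hand side is taken to be 0 on the event {τ ≤ t}. (First formula of Proposition 4.2: the key lemma for the delayed-information investor.) -/

import Mathlib

/-!
Write `D = E[1_{τ > t} | F^D_t]` and `N = E[φ 1_{τ > θ} | F^D_t]`, which is also
`E[φ S_θ | F^D_t]` by the tower property. On `{τ > t}` every set of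
`F^D_t ∨ σ(τ ≤ s : s ≤ t)` agrees with a set of `F^D_t`, and both `φ 1_{τ > θ}` and the
candidate `1_{τ > t} N / D` vanish off `{τ > t}`, so the candidate only has to be tested against
sets `B ∈ F^D_t`. For these the pull-out property gives
`E[1_B 1_{τ > t} N / D] = E[1_B D N / D] = E[1_B N]`, the last step because `N` vanishes where
`D` does: `E[1_{D = 0} 1_{τ > t}] = E[1_{D = 0} D] = 0`, so `{τ > t, D = 0}` is null.
Nothing bounds `N / D`; the integrability of the candidate comes from the same pull-out
computed with Lebesgue integrals, which needs no integrability.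
-/

open MeasureTheory ProbabilityTheory Set
open scoped NNReal Classical

noncomputable section

/-- Running infimum `X*_t = inf_{s ≤ t} X_s` of the process `X` over the time interval
`[0, t]`. -/
def runInf {Ω : Type*} (X : ℝ≥0 → Ω → ℝ) (t : ℝ≥0) (ω : Ω) : ℝ :=
  ⨅ s : Set.Icc (0 : ℝ≥0) t, X s.1 ω

/-- The σ-algebra `σ({τ ≤ s} : s ≤ t)` generated by the default observations up to time
`t`. -/
def defaultSigma {Ω : Type*} (τ : Ω → ℝ≥0) (t : ℝ≥0) : MeasurableSpace Ω :=
  MeasurableSpace.generateFrom {A | ∃ s ≤ t, A = {ω | τ ω ≤ s}}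

/-- The Azéma supermartingale `S_t = P(τ > t | F_t)` of `τ`. -/
def azema {Ω : Type*} [m0 : MeasurableSpace Ω] (P : Measure Ω) (F : Filtration ℝ≥0 m0)
    (τ : Ω → ℝ≥0) (t : ℝ≥0) : Ω → ℝ :=
  P[fun ω => if t < τ ω then (1 : ℝ) else 0|F t]

open scoped ENNReal

lemma measurable_runInf {Ω : Type*} [MeasurableSpace Ω] {X : ℝ≥0 → Ω → ℝ}
    (hX : ∀ s, Measurable (X s)) (hc : ∀ ω, Continuous fun s => X s ω) (u : ℝ≥0) :
    Measurable (runInf X u) := by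
  obtain ⟨Q, hQ_count, hQ_dense⟩ := TopologicalSpace.exists_countable_dense (Icc (0 : ℝ≥0) u)
  have : Countable Q := hQ_count.to_subtype
  have hQ : runInf X u = fun ω => ⨅ s : Q, X s.1.1 ω := funext fun ω =>
    (hQ_dense.ciInf' ((hc ω).comp continuous_subtype_val)).symm
  rw [hQ]
  exact Measurable.iInf fun s => hX _

lemma exists_inter_eq_of_measurableSet_sup_generateFrom {Ω : Type*} {m : MeasurableSpace Ω}
    {S : Set (Set Ω)} {E C : Set Ω} (hS : ∀ s ∈ S, s ⊆ Eᶜ)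
    (hC : MeasurableSet[m ⊔ MeasurableSpace.generateFrom S] C) :
    ∃ B, MeasurableSet[m] B ∧ E ∩ C = E ∩ B := by
  -- `map val (comap val m)` consists of the sets whose trace on `E` is the trace of an `m`-set.
  have hle : m ⊔ MeasurableSpace.generateFrom S ≤ (m.comap ((↑) : E → Ω)).map (↑) := by
    refine sup_le MeasurableSpace.le_map_comap (MeasurableSpace.generateFrom_le fun s hs => ?_)
    have hs_empty : ((↑) : E → Ω) ⁻¹' s = ∅ :=
      eq_empty_of_forall_notMem fun x hx => hS s hs hx x.2
    change MeasurableSet[m.comap _] (_ ⁻¹' s)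
    rw [hs_empty]
    exact MeasurableSet.empty
  obtain ⟨B, hB, hBC⟩ := hle C hC
  exact ⟨B, hB, (Subtype.preimage_coe_eq_preimage_coe_iff.1 hBC).symm⟩

section CondExp

variable {Ω : Type*} {m m0 : MeasurableSpace Ω} {μ : Measure Ω}

lemma stronglyMeasurable_condExp_div_condExp {f w : Ω → ℝ} :
    StronglyMeasurable[m] fun ω => μ[f|m] ω / μ[w|m] ω :=
  (stronglyMeasurable_condExp.measurable.div
    stronglyMeasurable_condExp.measurable).stronglyMeasurable

lemma setIntegral_eq_of_inter_eq {f : Ω → ℝ} {E B C : Set Ω} (hf : ∀ ω ∉ E, f ω = 0)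
    (hB : MeasurableSet B) (hC : MeasurableSet C) (hCB : E ∩ C = E ∩ B) :
    ∫ ω in C, f ω ∂μ = ∫ ω in B, f ω ∂μ := by
  rw [← integral_indicator hC, ← integral_indicator hB]
  congr 1 with ω
  by_cases hω : ω ∈ E
  · have hCB_ω : ω ∈ C ↔ ω ∈ B := by simpa [hω] using Set.ext_iff.1 hCB ω
    simp [indicator_apply, hCB_ω]
  · simp [indicator_apply, hf ω hω]

lemma lintegral_mul_ofReal_condExp (hm : m ≤ m0) [SigmaFinite (μ.trim hm)] {k : Ω → ℝ≥0∞}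
    (hk : Measurable[m] k) {w : Ω → ℝ} (hw : Integrable w μ) (hw0 : 0 ≤ᵐ[μ] w) :
    ∫⁻ ω, k ω * ENNReal.ofReal (μ[w|m] ω) ∂μ = ∫⁻ ω, k ω * ENNReal.ofReal (w ω) ∂μ := by
  have hν : (μ.withDensity fun ω => ENNReal.ofReal (μ[w|m] ω)).trim hm
      = (μ.withDensity fun ω => ENNReal.ofReal (w ω)).trim hm := by
    refine @Measure.ext _ m _ _ fun s hs => ?_
    rw [trim_measurableSet_eq hm hs, trim_measurableSet_eq hm hs, withDensity_apply _ (hm s hs),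
      withDensity_apply _ (hm s hs),
      ← ofReal_integral_eq_lintegral_ofReal integrable_condExp.integrableOn
        (ae_restrict_of_ae (condExp_nonneg hw0)),
      ← ofReal_integral_eq_lintegral_ofReal hw.integrableOn (ae_restrict_of_ae hw0),
      setIntegral_condExp hm hw hs]
  have key := congrArg (fun ν => ∫⁻ ω, k ω ∂ν) hν
  simp only [lintegral_trim hm hk] at key
  rw [lintegral_withDensity_eq_lintegral_mul₀ (by fun_prop) (hk.mono hm le_rfl).aemeasurable,
    lintegral_withDensity_eq_lintegral_mul₀ (by fun_prop) (hk.mono hm le_rfl).aemeasurable] at key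
  simpa only [Pi.mul_apply, mul_comm] using key

lemma ae_eq_zero_of_condExp_eq_zero (hm : m ≤ m0) [SigmaFinite (μ.trim hm)] {w : Ω → ℝ}
    (hw : Integrable w μ) (hw0 : 0 ≤ᵐ[μ] w) : ∀ᵐ ω ∂μ, μ[w|m] ω = 0 → w ω = 0 := by
  set A := {ω | μ[w|m] ω = 0}
  have hA : MeasurableSet[m] A := stronglyMeasurable_condExp.measurable (measurableSet_singleton 0)
  have hint : ∫ ω in A, w ω ∂μ = 0 := by
    rw [← setIntegral_condExp hm hw hA]
    exact setIntegral_eq_zero_of_forall_eq_zero fun ω hω => hω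
  have hwA := (setIntegral_eq_zero_iff_of_nonneg_ae (ae_restrict_of_ae hw0) hw.integrableOn).1 hint
  exact (ae_restrict_iff' (hm A hA)).1 hwA

lemma ae_condExp_eq_zero_of_condExp_eq_zero (hm : m ≤ m0) [SigmaFinite (μ.trim hm)]
    {w f : Ω → ℝ} (hw : Integrable w μ) (hw0 : 0 ≤ᵐ[μ] w) (hf : Integrable f μ)
    (hfw : ∀ᵐ ω ∂μ, w ω = 0 → f ω = 0) : ∀ᵐ ω ∂μ, μ[w|m] ω = 0 → μ[f|m] ω = 0 := by
  set A := {ω | μ[w|m] ω = 0}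
  have hA : MeasurableSet[m] A := stronglyMeasurable_condExp.measurable (measurableSet_singleton 0)
  have hfA : A.indicator f =ᵐ[μ] 0 := by
    filter_upwards [ae_eq_zero_of_condExp_eq_zero hm hw hw0, hfw] with ω hwA hfw
    by_cases hω : ω ∈ A
    · simp [hω, hfw (hwA hω)]
    · simp [hω]
  have hNA : A.indicator (μ[f|m]) =ᵐ[μ] 0 := by
    have := (condExp_indicator hf hA).symm.trans (condExp_congr_ae hfA)
    rwa [condExp_zero] at this
  filter_upwards [hNA] with ω hω hωA
  rwa [indicator_of_mem (show ω ∈ A from hωA)] at hω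

lemma integrable_div_condExp_mul (hm : m ≤ m0) [SigmaFinite (μ.trim hm)] {w N : Ω → ℝ}
    (hw : Integrable w μ) (hw0 : 0 ≤ᵐ[μ] w) (hN : StronglyMeasurable[m] N)
    (hN_int : Integrable N μ) : Integrable (fun ω => N ω / μ[w|m] ω * w ω) μ := by
  have hmeas : Measurable[m] fun ω => N ω / μ[w|m] ω :=
    hN.measurable.div stronglyMeasurable_condExp.measurable
  refine ⟨(hmeas.mono hm le_rfl).aestronglyMeasurable.mul hw.aestronglyMeasurable, ?_⟩
  calc ∫⁻ ω, ‖N ω / μ[w|m] ω * w ω‖ₑ ∂μ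
      = ∫⁻ ω, ‖N ω / μ[w|m] ω‖ₑ * ENNReal.ofReal (w ω) ∂μ := by
        refine lintegral_congr_ae ?_
        filter_upwards [hw0] with ω hω
        rw [enorm_mul, Real.enorm_eq_ofReal hω]
    _ = ∫⁻ ω, ‖N ω / μ[w|m] ω‖ₑ * ENNReal.ofReal (μ[w|m] ω) ∂μ :=
        (lintegral_mul_ofReal_condExp hm (measurable_enorm.comp hmeas) hw hw0).symm
    _ ≤ ∫⁻ ω, ‖N ω‖ₑ ∂μ := by
        refine lintegral_mono_ae ?_
        filter_upwards [condExp_nonneg (m := m) hw0] with ω hω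
        rw [← Real.enorm_eq_ofReal hω, ← enorm_mul]
        rcases eq_or_ne (μ[w|m] ω) 0 with h | h <;> simp [h]
    _ < ∞ := hN_int.2

lemma setIntegral_condExp_div_condExp_mul (hm : m ≤ m0) [SigmaFinite (μ.trim hm)]
    {w f : Ω → ℝ} (hw : Integrable w μ) (hw0 : 0 ≤ᵐ[μ] w) (hf : Integrable f μ)
    (hfw : ∀ᵐ ω ∂μ, w ω = 0 → f ω = 0) {B : Set Ω} (hB : MeasurableSet[m] B) :
    ∫ ω in B, μ[f|m] ω / μ[w|m] ω * w ω ∂μ = ∫ ω in B, f ω ∂μ := by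
  set h := fun ω => μ[f|m] ω / μ[w|m] ω
  have hh : StronglyMeasurable[m] h := stronglyMeasurable_condExp_div_condExp
  have hhw : Integrable (h * w) μ :=
    integrable_div_condExp_mul hm hw hw0 stronglyMeasurable_condExp integrable_condExp
  have hpull : μ[h * w|m] =ᵐ[μ] μ[f|m] := by
    filter_upwards [condExp_mul_of_stronglyMeasurable_left hh hhw hw,
      ae_condExp_eq_zero_of_condExp_eq_zero hm hw hw0 hf hfw] with ω hω hfw
    rw [hω]
    exact div_mul_cancel_of_imp hfw
  calc ∫ ω in B, h ω * w ω ∂μ = ∫ ω in B, μ[h * w|m] ω ∂μ :=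
        (setIntegral_condExp hm hhw hB).symm
    _ = ∫ ω in B, μ[f|m] ω ∂μ := integral_congr_ae (ae_restrict_of_ae hpull)
    _ = ∫ ω in B, f ω ∂μ := setIntegral_condExp hm hf hB

lemma ae_condExp_indicator_one_ne_zero (hm : m ≤ m0) [IsFiniteMeasure μ] {E : Set Ω}
    (hE : MeasurableSet E) : ∀ᵐ ω ∂μ, ω ∈ E → μ[E.indicator (1 : Ω → ℝ)|m] ω ≠ 0 := by
  filter_upwards [ae_eq_zero_of_condExp_eq_zero hm ((integrable_const 1).indicator hE)
    (ae_of_all _ (indicator_nonneg fun _ _ => zero_le_one))] with ω hω hωE hD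
  simpa [hωE] using hω hD

lemma condExp_mul_condExp {m₁ m₂ : MeasurableSpace Ω} (hm₁₂ : m₁ ≤ m₂) (hm₂ : m₂ ≤ m0)
    [SigmaFinite (μ.trim hm₂)] {φ g : Ω → ℝ}
    (hφ : StronglyMeasurable[m₂] φ) (hφg : Integrable (φ * g) μ) (hg : Integrable g μ) :
    μ[φ * μ[g|m₂]|m₁] =ᵐ[μ] μ[φ * g|m₁] :=
  (condExp_congr_ae (condExp_mul_of_stronglyMeasurable_left hφ hφg hg).symm).trans
    (condExp_condExp_of_le hm₁₂ hm₂)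

theorem condExp_sup_generateFrom_ae_eq [IsFiniteMeasure μ] {S : Set (Set Ω)} {E : Set Ω}
    (hS : ∀ s ∈ S, s ⊆ Eᶜ) (hEc : Eᶜ ∈ S) (hle : m ⊔ MeasurableSpace.generateFrom S ≤ m0)
    {f : Ω → ℝ} (hf : Integrable f μ) (hfE : ∀ ω ∉ E, f ω = 0) :
    μ[f|m ⊔ MeasurableSpace.generateFrom S] =ᵐ[μ]
      E.indicator fun ω => μ[f|m] ω / μ[E.indicator (1 : Ω → ℝ)|m] ω := by
  have hm : m ≤ m0 := le_sup_left.trans hle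
  have hE : MeasurableSet[m ⊔ MeasurableSpace.generateFrom S] E := by
    simpa using (le_sup_right (a := m) _ (MeasurableSpace.measurableSet_generateFrom hEc)).compl
  set w := E.indicator (1 : Ω → ℝ)
  have hw : Integrable w μ := (integrable_const 1).indicator (hle _ hE)
  have hw0 : 0 ≤ᵐ[μ] w := ae_of_all _ (indicator_nonneg fun _ _ => zero_le_one)
  have hfw : ∀ᵐ ω ∂μ, w ω = 0 → f ω = 0 :=
    ae_of_all _ fun ω hω => hfE ω fun hωE => by simp [w, hωE] at hω
  set h := fun ω => μ[f|m] ω / μ[w|m] ω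
  have hh : StronglyMeasurable[m] h := stronglyMeasurable_condExp_div_condExp
  have hhw : E.indicator h = fun ω => h ω * w ω := by
    ext ω
    by_cases hω : ω ∈ E <;> simp [w, hω]
  refine (ae_eq_condExp_of_forall_setIntegral_eq hle hf (fun C _ _ => ?_) (fun C hC _ => ?_)
    ((hh.mono le_sup_left).indicator hE).aestronglyMeasurable).symm
  · rw [hhw]
    exact (integrable_div_condExp_mul hm hw hw0 stronglyMeasurable_condExp
      integrable_condExp).integrableOn
  · obtain ⟨B, hB, hCB⟩ := exists_inter_eq_of_measurableSet_sup_generateFrom hS hC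
    rw [setIntegral_eq_of_inter_eq (fun ω hω => indicator_of_notMem hω _) (hm _ hB) (hle _ hC)
      hCB, setIntegral_eq_of_inter_eq hfE (hm _ hB) (hle _ hC) hCB, hhw]
    exact setIntegral_condExp_div_condExp_mul hm hw hw0 hf hfw hB

lemma condExp_sup_defaultSigma_ae_eq [IsFiniteMeasure μ] {τ : Ω → ℝ≥0}
    (hτ : ∀ u, MeasurableSet {ω | u < τ ω}) {t : ℝ≥0} (hm : m ≤ m0) {f : Ω → ℝ}
    (hf : Integrable f μ) (hft : ∀ ω, τ ω ≤ t → f ω = 0) :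
    μ[f|m ⊔ defaultSigma τ t] =ᵐ[μ] {ω | t < τ ω}.indicator
      fun ω => μ[f|m] ω / μ[{ω | t < τ ω}.indicator (1 : Ω → ℝ)|m] ω := by
  rw [defaultSigma]
  refine condExp_sup_generateFrom_ae_eq ?_ ?_ ?_ hf fun ω hω => hft ω (not_lt.1 hω)
  · rintro _ ⟨s, hs, rfl⟩ ω hω
    exact not_lt.2 (le_trans hω hs)
  · exact ⟨t, le_rfl, by ext; simp⟩
  · refine sup_le hm (MeasurableSpace.generateFrom_le ?_)
    rintro _ ⟨s, -, rfl⟩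
    simpa only [compl_ofPred, not_lt] using (hτ s).compl

end CondExp

lemma azema_eq_condExp_indicator {Ω : Type*} [m0 : MeasurableSpace Ω] (P : Measure Ω)
    (F : Filtration ℝ≥0 m0) (τ : Ω → ℝ≥0) (t : ℝ≥0) :
    azema P F τ t = P[{ω | t < τ ω}.indicator 1|F t] :=
  rfl

theorem delayed_information_key_lemma_general
    {Ω : Type*} [m0 : MeasurableSpace Ω] {P : Measure Ω} [IsProbabilityMeasure P]
    (F : Filtration ℝ≥0 m0)
    (X : ℝ≥0 → Ω → ℝ) (hX_adapted : Adapted F X)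
    (hX_cont : ∀ ω, Continuous fun s => X s ω)
    (L : Ω → ℝ) (hL : Measurable L)
    (τ : Ω → ℝ≥0)
    (hτ : ∀ (θ : ℝ≥0) (ω : Ω), θ < τ ω ↔ L ω < runInf X θ ω)
    -- the delayed default-free filtration, a sub-filtration of `F`
    (FD : Filtration ℝ≥0 m0) (hFD : ∀ s, FD s ≤ F s)
    (t θ : ℝ≥0) (htθ : t ≤ θ)
    (φ : Ω → ℝ) (hφ_meas : Measurable[F θ] φ) (hφ_int : Integrable φ P) :
    P {ω | t < τ ω ∧ (P[azema P F τ t|FD t]) ω = 0} = 0 ∧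
    (P[fun ω => φ ω * (if θ < τ ω then 1 else 0)|FD t ⊔ defaultSigma τ t]) =ᵐ[P]
      fun ω => if t < τ ω then
        (P[fun ω' => φ ω' * azema P F τ θ ω'|FD t]) ω / (P[azema P F τ t|FD t]) ω
      else 0 := by
  have hsurvival : ∀ u, MeasurableSet {ω | u < τ ω} := fun u => by
    simp_rw [hτ u]
    exact measurableSet_lt hL <| measurable_runInf
      (fun s => (hX_adapted s).mono (F.le s) le_rfl) hX_cont u
  have hf : (fun ω => φ ω * (if θ < τ ω then 1 else 0)) = φ * {ω | θ < τ ω}.indicator 1 := by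
    ext ω; simp [indicator_apply]
  have hf_int : Integrable (φ * {ω | θ < τ ω}.indicator 1) P :=
    (hφ_int.indicator (hsurvival θ)).congr (ae_of_all _ fun ω => by simp [indicator_apply])
  have hf_vanish : ∀ ω, τ ω ≤ t → (φ * {ω | θ < τ ω}.indicator (1 : Ω → ℝ)) ω = 0 :=
    fun ω hω => by simp [not_lt.2 (hω.trans htθ)]
  have hD : P[azema P F τ t|FD t] =ᵐ[P] P[{ω | t < τ ω}.indicator 1|FD t] := by
    rw [azema_eq_condExp_indicator]
    exact condExp_condExp_of_le (hFD t) (F.le t)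
  have hN : P[fun ω => φ ω * azema P F τ θ ω|FD t] =ᵐ[P]
      P[φ * {ω | θ < τ ω}.indicator 1|FD t] := by
    rw [azema_eq_condExp_indicator]
    exact condExp_mul_condExp ((hFD t).trans (F.mono htθ)) (F.le θ)
      hφ_meas.stronglyMeasurable hf_int ((integrable_const 1).indicator (hsurvival θ))
  refine ⟨?_, ?_⟩
  · rw [measure_eq_zero_iff_ae_notMem]
    filter_upwards [ae_condExp_indicator_one_ne_zero (FD.le t) (hsurvival t), hD]
      with ω hD_ne hDω ⟨hω, hD_zero⟩
    exact hD_ne hω (hDω ▸ hD_zero)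
  · rw [hf]
    filter_upwards [condExp_sup_defaultSigma_ae_eq hsurvival (FD.le t) hf_int hf_vanish,
      hD, hN] with ω hω hDω hNω
    rw [hω, hDω, hNω]
    simp [indicator_apply]

/-- **Proposition 4.2, first formula.** For the delayed-information investor, for all
`0 ≤ t ≤ θ` and every integrable `F_θ`-measurable `φ_θ`, one has
`P(τ > t, E[S_t | F^D_t] = 0) = 0` and, `P`-a.s.,
`E_P[φ_θ 1_{τ > θ} | G^D_t] = 1_{τ > t} E_P[φ_θ S_θ | F^D_t] / E_P[S_t | F^D_t]` (the
right-hand side being `0` on `{τ ≤ t}`). -/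
theorem delayed_information_key_lemma
    {Ω : Type*} [m0 : MeasurableSpace Ω] {P : Measure Ω} [IsProbabilityMeasure P]
    (F : Filtration ℝ≥0 m0)
    (X : ℝ≥0 → Ω → ℝ) (hX_adapted : Adapted F X)
    (hX_cont : ∀ ω, Continuous fun s => X s ω)
    (L : Ω → ℝ) (hL : Measurable L)
    (hX0 : ∀ᵐ ω ∂P, L ω < X 0 ω)
    (τ : Ω → ℝ≥0)
    (hτ : ∀ (θ : ℝ≥0) (ω : Ω), θ < τ ω ↔ L ω < runInf X θ ω)
    -- the delayed default-free filtration, a sub-filtration of `F`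
    (FD : Filtration ℝ≥0 m0) (hFD : ∀ s, FD s ≤ F s)
    (t θ : ℝ≥0) (htθ : t ≤ θ)
    (φ : Ω → ℝ) (hφ_meas : Measurable[F θ] φ) (hφ_int : Integrable φ P) :
    P {ω | t < τ ω ∧ (P[azema P F τ t|FD t]) ω = 0} = 0 ∧
    (P[fun ω => φ ω * (if θ < τ ω then 1 else 0)|FD t ⊔ defaultSigma τ t]) =ᵐ[P]
      fun ω => if t < τ ω then
        (P[fun ω' => φ ω' * azema P F τ θ ω'|FD t]) ω / (P[azema P F τ t|FD t]) ω
      else 0 :=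
  delayed_information_key_lemma_general (m0 := m0) F X hX_adapted hX_cont L hL τ hτ FD hFD t θ htθ φ
    hφ_meas hφ_int
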